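/- arXiv:1811.05971 — 2 statements merged into one kernel-verified Lean document; each statement's English description precedes it below -/
import Mathlib

section
/- Let (λ_j) and (μ_j) be strictly increasing sequences of positive reals tending to infinity, and (r_j), (s_j) sequences of nonzero reals with Σ |r_j|/λ_j² < ∞ and Σ |s_j|/μ_j² < ∞. If b + Σ_j (r_j/λ_j) · 1/(η + λ_j) = c + Σ_j (s_j/μ_j) · 1/(η + μ_j) for all real η > 0 (with b = −Σ r_j/λ_j, c = −Σ s_j/μ_j both assumed absolutely convergent), then λ_j = μ_j and r_j = s_j for all j. -/
/-!
Put `aⱼ = rⱼ/λⱼ`, `bⱼ = sⱼ/μⱼ`. Both pole sums tend to `0` as `η → ∞`, so the constants agree and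
`∑ aⱼ/(η+λⱼ) = ∑ bⱼ/(η+μⱼ)` on `(0, ∞)`. Differentiating termwise and evaluating at `η = 1` gives
equal power moments `∑ aⱼ xⱼⁿ = ∑ bⱼ yⱼⁿ` (`n ≥ 1`) with strictly decreasing nodes
`xⱼ = 1/(1+λⱼ)`, `yⱼ = 1/(1+μⱼ)`. After division by `x₀ⁿ`, dominated convergence as `n → ∞` kills
every term but the first, so the moments determine the largest node and its weight; removing the
first term and inducting recovers all nodes and weights.
-/

open Filter Topology

section PowerMoments

variable {a b x y : ℕ → ℝ}

theorem summable_mul_pow_of_abs_le {c : ℝ} (ha : Summable fun j => |a j|) (hx : ∀ j, |x j| ≤ c)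
    (n : ℕ) : Summable fun j => a j * x j ^ n :=
  .of_norm_bounded (ha.mul_right (c ^ n)) fun j => by
    rw [norm_mul, norm_pow, Real.norm_eq_abs, Real.norm_eq_abs]
    gcongr
    exact hx j

theorem tendsto_tsum_mul_pow_div_pow_head (hx : ∀ j ≠ 0, |x j| < x 0)
    (ha : Summable fun j => |a j|) :
    Tendsto (fun n : ℕ => (∑' j, a j * x j ^ n) / x 0 ^ n) atTop (𝓝 (a 0)) := by
  have hx0 : 0 < x 0 := (abs_nonneg _).trans_lt (hx 1 one_ne_zero)
  have hratio : ∀ j, |x j / x 0| ≤ 1 := fun j => by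
    rw [abs_div, abs_of_pos hx0, div_le_one hx0]
    rcases eq_or_ne j 0 with rfl | hj
    exacts [(abs_of_pos hx0).le, (hx j hj).le]
  have hlim : ∀ j, Tendsto (fun n : ℕ => a j * (x j / x 0) ^ n) atTop
      (𝓝 (if j = 0 then a 0 else 0)) := fun j => by
    rcases eq_or_ne j 0 with rfl | hj
    · simp [div_self hx0.ne']
    · rw [if_neg hj, ← mul_zero (a j)]
      refine (tendsto_pow_atTop_nhds_zero_of_abs_lt_one ?_).const_mul _
      rw [abs_div, abs_of_pos hx0, div_lt_one hx0]
      exact hx j hj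
  have := tendsto_tsum_of_dominated_convergence ha hlim (.of_forall fun n j => by
    rw [norm_mul, norm_pow, Real.norm_eq_abs, Real.norm_eq_abs]
    exact mul_le_of_le_one_right (abs_nonneg _) (pow_le_one₀ (abs_nonneg _) (hratio j)))
  rw [tsum_ite_eq] at this
  refine this.congr fun n => ?_
  rw [← tsum_div_const]
  exact tsum_congr fun j => by rw [div_pow, mul_div_assoc]

theorem head_le_of_tsum_mul_pow_eventuallyEq (hx : ∀ j ≠ 0, |x j| < x 0)
    (hy : ∀ j ≠ 0, |y j| < y 0) (ha : Summable fun j => |a j|) (hb : Summable fun j => |b j|)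
    (ha0 : a 0 ≠ 0)
    (h : (fun n => ∑' j, a j * x j ^ n) =ᶠ[atTop] fun n => ∑' j, b j * y j ^ n) :
    x 0 ≤ y 0 := by
  by_contra! hyx
  have hx0 : 0 < x 0 := (abs_nonneg _).trans_lt (hx 1 one_ne_zero)
  have hy0 : 0 < y 0 := (abs_nonneg _).trans_lt (hy 1 one_ne_zero)
  have hb0 : Tendsto (fun n : ℕ => (∑' j, b j * y j ^ n) / x 0 ^ n) atTop (𝓝 0) := by
    have := (tendsto_tsum_mul_pow_div_pow_head hy hb).mul
      (tendsto_pow_atTop_nhds_zero_of_lt_one (div_pos hy0 hx0).le ((div_lt_one hx0).2 hyx))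
    rw [mul_zero] at this
    refine this.congr fun n => ?_
    rw [div_pow]
    field_simp
  refine ha0 (tendsto_nhds_unique (tendsto_tsum_mul_pow_div_pow_head hx ha) (hb0.congr' ?_))
  filter_upwards [h] with n hn
  rw [hn]

theorem head_eq_of_tsum_mul_pow_eventuallyEq (hx : ∀ j ≠ 0, |x j| < x 0)
    (hy : ∀ j ≠ 0, |y j| < y 0) (ha : Summable fun j => |a j|) (hb : Summable fun j => |b j|)
    (ha0 : a 0 ≠ 0) (hb0 : b 0 ≠ 0)
    (h : (fun n => ∑' j, a j * x j ^ n) =ᶠ[atTop] fun n => ∑' j, b j * y j ^ n) :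
    x 0 = y 0 ∧ a 0 = b 0 := by
  have hxy : x 0 = y 0 := le_antisymm (head_le_of_tsum_mul_pow_eventuallyEq hx hy ha hb ha0 h)
    (head_le_of_tsum_mul_pow_eventuallyEq hy hx hb ha hb0 h.symm)
  refine ⟨hxy, tendsto_nhds_unique (tendsto_tsum_mul_pow_div_pow_head hx ha) ?_⟩
  refine (tendsto_tsum_mul_pow_div_pow_head hy hb).congr' ?_
  filter_upwards [h] with n hn
  rw [hn, hxy]

theorem StrictAnti.abs_lt_apply_zero (hx : StrictAnti x) (hpos : ∀ j, 0 < x j) :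
    ∀ j ≠ 0, |x j| < x 0 :=
  fun j hj => (abs_of_pos (hpos j)).trans_lt (hx (Nat.pos_of_ne_zero hj))

theorem tsum_mul_pow_eq_head_add_tail (hx : StrictAnti x) (hpos : ∀ j, 0 < x j)
    (ha : Summable fun j => |a j|) (n : ℕ) :
    ∑' j, a j * x j ^ n = a 0 * x 0 ^ n + ∑' j, a (j + 1) * x (j + 1) ^ n :=
  (summable_mul_pow_of_abs_le ha (fun j => (abs_of_pos (hpos j)).trans_le
    (hx.antitone (Nat.zero_le j))) n).tsum_eq_zero_add

theorem eq_of_tsum_mul_pow_eventuallyEq (hx : StrictAnti x) (hy : StrictAnti y)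
    (hxpos : ∀ j, 0 < x j) (hypos : ∀ j, 0 < y j) (ha : ∀ j, a j ≠ 0) (hb : ∀ j, b j ≠ 0)
    (hsa : Summable fun j => |a j|) (hsb : Summable fun j => |b j|)
    (h : (fun n => ∑' j, a j * x j ^ n) =ᶠ[atTop] fun n => ∑' j, b j * y j ^ n) (k : ℕ) :
    x k = y k ∧ a k = b k := by
  induction k generalizing a b x y with
  | zero =>
    exact head_eq_of_tsum_mul_pow_eventuallyEq (hx.abs_lt_apply_zero hxpos)
      (hy.abs_lt_apply_zero hypos) hsa hsb (ha 0) (hb 0) h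
  | succ k ih =>
    obtain ⟨hxy, hab⟩ := head_eq_of_tsum_mul_pow_eventuallyEq (hx.abs_lt_apply_zero hxpos)
      (hy.abs_lt_apply_zero hypos) hsa hsb (ha 0) (hb 0) h
    refine ih (a := fun j => a (j + 1)) (b := fun j => b (j + 1)) (x := fun j => x (j + 1))
      (y := fun j => y (j + 1)) (fun _ _ hij => hx (Nat.succ_lt_succ hij))
      (fun _ _ hij => hy (Nat.succ_lt_succ hij))
      (fun _ => hxpos _) (fun _ => hypos _) (fun _ => ha _) (fun _ => hb _)
      ((summable_nat_add_iff 1).2 hsa) ((summable_nat_add_iff 1).2 hsb) ?_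
    filter_upwards [h] with n hn
    rwa [tsum_mul_pow_eq_head_add_tail hx hxpos hsa, tsum_mul_pow_eq_head_add_tail hy hypos hsb,
      hxy, hab, add_right_inj] at hn

end PowerMoments

section PoleSums

variable {a b c d : ℕ → ℝ}

theorem summable_div_add_pow (hc : ∀ j, 0 ≤ c j) (ha : Summable fun j => |a j|) {η : ℝ}
    (hη : 0 < η) (m : ℕ) : Summable fun j => a j / (η + c j) ^ m := by
  refine (summable_mul_pow_of_abs_le ha (x := fun j => (η + c j)⁻¹) (c := η⁻¹) (fun j => ?_)
    m).congr fun j => ?_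
  · rw [abs_inv, abs_of_pos (by linarith [hc j])]
    exact inv_anti₀ hη (le_add_of_nonneg_right (hc j))
  · rw [inv_pow, div_eq_mul_inv]

theorem tendsto_tsum_div_add_atTop_zero (hc : ∀ j, 0 ≤ c j) (ha : Summable fun j => |a j|) :
    Tendsto (fun η => ∑' j, a j / (η + c j)) atTop (𝓝 0) := by
  have hlim : ∀ j, Tendsto (fun η => a j / (η + c j)) atTop (𝓝 0) := fun j =>
    tendsto_const_nhds.div_atTop (tendsto_atTop_add_const_right _ _ tendsto_id)
  have hbound : ∀ᶠ η in atTop, ∀ j, ‖a j / (η + c j)‖ ≤ |a j| := by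
    filter_upwards [eventually_ge_atTop 1] with η hη j
    rw [Real.norm_eq_abs, abs_div, abs_of_pos (show 0 < η + c j by linarith [hc j])]
    exact div_le_self (abs_nonneg (a j)) (by linarith [hc j])
  simpa using tendsto_tsum_of_dominated_convergence ha hlim hbound

theorem hasDerivAt_tsum_div_add_pow (hc : ∀ j, 0 ≤ c j) (ha : Summable fun j => |a j|) (n : ℕ)
    {η : ℝ} (hη : 0 < η) :
    HasDerivAt (fun t => ∑' j, a j / (t + c j) ^ (n + 1))
      (-(n + 1) * ∑' j, a j / (η + c j) ^ (n + 2)) η := by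
  have hpos : ∀ t ∈ Set.Ioi (η / 2), ∀ j, 0 < t + c j := fun t ht j => by
    have : η / 2 < t := ht
    linarith [hc j]
  rw [← tsum_mul_left]
  refine hasDerivAt_tsum_of_isPreconnected (t := Set.Ioi (η / 2)) (y₀ := η)
    (g := fun j t => a j / (t + c j) ^ (n + 1))
    (g' := fun j t => -(n + 1 : ℝ) * (a j / (t + c j) ^ (n + 2)))
    (u := fun j => (n + 1) * |a j| / (η / 2) ^ (n + 2)) ((ha.mul_left _).div_const _) isOpen_Ioi
    isPreconnected_Ioi (fun j t ht => ?_) (fun j t ht => ?_) (half_lt_self hη) ?_ (half_lt_self hη)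
  · have hne := (hpos t ht j).ne'
    have := ((((hasDerivAt_id' t).add_const (c j)).fun_pow (n + 1)).fun_inv
      (pow_ne_zero _ hne)).const_mul (a j)
    simp only [← div_eq_mul_inv] at this
    refine this.congr_deriv ?_
    field_simp
    push_cast
    ring
  · have h1 := hpos t ht j
    have h2 : η / 2 < t := ht
    calc ‖-(n + 1 : ℝ) * (a j / (t + c j) ^ (n + 2))‖
        = (n + 1) * (|a j| / (t + c j) ^ (n + 2)) := by
          rw [norm_mul, norm_div, norm_pow, Real.norm_of_nonneg h1.le, norm_neg,
            Real.norm_of_nonneg (by positivity), Real.norm_eq_abs]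
      _ ≤ (n + 1) * |a j| / (η / 2) ^ (n + 2) := by
          rw [mul_div_assoc]
          gcongr
          linarith [hc j]
  · exact summable_div_add_pow hc ha hη _

theorem tsum_div_add_pow_eq_of_tsum_div_add_eq (hc : ∀ j, 0 ≤ c j) (hd : ∀ j, 0 ≤ d j)
    (ha : Summable fun j => |a j|) (hb : Summable fun j => |b j|)
    (h : ∀ η, 0 < η → ∑' j, a j / (η + c j) = ∑' j, b j / (η + d j)) (n : ℕ) {η : ℝ}
    (hη : 0 < η) :
    ∑' j, a j / (η + c j) ^ (n + 1) = ∑' j, b j / (η + d j) ^ (n + 1) := by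
  induction n generalizing η with
  | zero => simpa only [zero_add, pow_one] using h η hη
  | succ n ih =>
    have hnear : (fun t => ∑' j, a j / (t + c j) ^ (n + 1)) =ᶠ[𝓝 η]
        fun t => ∑' j, b j / (t + d j) ^ (n + 1) :=
      eventually_of_mem (Ioi_mem_nhds hη) fun t ht => ih ht
    have hderiv := (hasDerivAt_tsum_div_add_pow hc ha n hη).unique
      ((hasDerivAt_tsum_div_add_pow hd hb n hη).congr_of_eventuallyEq hnear)
    exact mul_left_cancel₀ (neg_ne_zero.2 n.cast_add_one_ne_zero) hderiv

end PoleSums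

theorem poles_residues_unique_general
    (lam mu : ℕ → ℝ) (hlam : StrictMono lam) (hmu : StrictMono mu)
    (hlampos : ∀ j, 0 < lam j) (hmupos : ∀ j, 0 < mu j)
    (r s : ℕ → ℝ) (hr : ∀ j, r j ≠ 0) (hs : ∀ j, s j ≠ 0)
    (hbsum : Summable (fun j => |r j / lam j|))
    (hcsum : Summable (fun j => |s j / mu j|))
    (heq : ∀ η : ℝ, 0 < η →
      (-∑' j, r j / lam j) + ∑' j, (r j / lam j) * (1 / (η + lam j)) =
      (-∑' j, s j / mu j) + ∑' j, (s j / mu j) * (1 / (η + mu j))) :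
    ∀ j, lam j = mu j ∧ r j = s j := by
  simp only [mul_one_div] at heq
  have hlam0 : ∀ j, 0 ≤ lam j := fun j => (hlampos j).le
  have hmu0 : ∀ j, 0 ≤ mu j := fun j => (hmupos j).le
  have hconst : ∑' j, r j / lam j = ∑' j, s j / mu j := by
    have hvanish := (tendsto_tsum_div_add_atTop_zero hlam0 hbsum).sub
      (tendsto_tsum_div_add_atTop_zero hmu0 hcsum)
    rw [sub_zero] at hvanish
    refine sub_eq_zero.1 (tendsto_nhds_unique (tendsto_const_nhds.congr' ?_) hvanish)
    filter_upwards [eventually_gt_atTop 0] with η hη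
    linarith [heq η hη]
  have hpoles : ∀ η, 0 < η →
      ∑' j, r j / lam j / (η + lam j) = ∑' j, s j / mu j / (η + mu j) := fun η hη => by
    linarith [heq η hη]
  have hmoments : (fun n => ∑' j, r j / lam j * (1 + lam j)⁻¹ ^ n) =ᶠ[atTop]
      fun n => ∑' j, s j / mu j * (1 + mu j)⁻¹ ^ n := by
    filter_upwards [eventually_ge_atTop 1] with n hn
    obtain ⟨k, rfl⟩ := Nat.exists_eq_add_of_le' hn
    simpa only [inv_pow, ← div_eq_mul_inv] using
      tsum_div_add_pow_eq_of_tsum_div_add_eq hlam0 hmu0 hbsum hcsum hpoles k one_pos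
  have hanti : ∀ {c : ℕ → ℝ}, StrictMono c → (∀ j, 0 < c j) → StrictAnti fun j => (1 + c j)⁻¹ :=
    fun hc hpos i j hij => inv_strictAnti₀ (by linarith [hpos i]) (by linarith [hc hij])
  intro j
  obtain ⟨hxy, hab⟩ := eq_of_tsum_mul_pow_eventuallyEq (hanti hlam hlampos) (hanti hmu hmupos)
    (fun j => by have := hlampos j; positivity) (fun j => by have := hmupos j; positivity)
    (fun j => div_ne_zero (hr j) (hlampos j).ne') (fun j => div_ne_zero (hs j) (hmupos j).ne')
    hbsum hcsum hmoments j
  have hlm : lam j = mu j := add_left_cancel (inv_injective hxy)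
  exact ⟨hlm, (div_left_inj' (hmupos j).ne').1 (hlm ▸ hab)⟩

/-- Identity of two sums of simple poles on the negative real axis:
if `b + ∑ (rⱼ/λⱼ)/(η+λⱼ) = c + ∑ (sⱼ/μⱼ)/(η+μⱼ)` for all real `η > 0`,
where `b = −∑ rⱼ/λⱼ`, `c = −∑ sⱼ/μⱼ`, then pole locations and residues coincide:
`λⱼ = μⱼ` and `rⱼ = sⱼ` for all `j`. -/
theorem poles_residues_unique
    (lam mu : ℕ → ℝ) (hlam : StrictMono lam) (hmu : StrictMono mu)
    (hlampos : ∀ j, 0 < lam j) (hmupos : ∀ j, 0 < mu j)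
    (hlamtop : Filter.Tendsto lam Filter.atTop Filter.atTop)
    (hmutop : Filter.Tendsto mu Filter.atTop Filter.atTop)
    (r s : ℕ → ℝ) (hr : ∀ j, r j ≠ 0) (hs : ∀ j, s j ≠ 0)
    (hrsum : Summable (fun j => |r j| / (lam j) ^ 2))
    (hssum : Summable (fun j => |s j| / (mu j) ^ 2))
    (hbsum : Summable (fun j => |r j / lam j|))
    (hcsum : Summable (fun j => |s j / mu j|))
    (heq : ∀ η : ℝ, 0 < η →
      (-∑' j, r j / lam j) + ∑' j, (r j / lam j) * (1 / (η + lam j)) =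
      (-∑' j, s j / mu j) + ∑' j, (s j / mu j) * (1 / (η + mu j))) :
    ∀ j, lam j = mu j ∧ r j = s j :=
  poles_residues_unique_general lam mu hlam hmu hlampos hmupos r s hr hs hbsum hcsum heq
end

section
/- For λ > 0, 0 < α < 1, and Re z > 0 (z real positive suffices), the Laplace transform of t ↦ E_{α,1}(−λ t^α) is z^{α−1}/(z^α + λ): ∫₀^∞ e^{−z t} E_{α,1}(−λ t^α) dt = z^{α−1}/(z^α + λ) for real z > λ^{1/α}. -/
/-- Two-parameter Mittag-Leffler function (real argument and parameters). -/
noncomputable def mittagLefflerReal (α β : ℝ) (x : ℝ) : ℝ :=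
  ∑' k : ℕ, x ^ k / Real.Gamma (α * k + β)

/-!
Expand `E_{α,1}(c t^α) = ∑ₖ cᵏ t^{αk} / Γ(αk+1)` and integrate termwise: the Gamma integral
`∫₀^∞ e^{-zt} t^{αk} dt = Γ(αk+1) / z^{αk+1}` cancels the Gamma factor, leaving the geometric
series `z⁻¹ ∑ₖ (c / z^α)ᵏ = z^{α-1} / (z^α - c)`. The same computation with `|c|` in place of `c`
bounds the integrals of the absolute values of the terms by a convergent geometric series when
`|c| < z^α`, which justifies exchanging sum and integral.
-/

open MeasureTheory Set Real

noncomputable def mittagLefflerTerm (α β x : ℝ) (k : ℕ) : ℝ :=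
  x ^ k / Gamma (α * k + β)

lemma integral_exp_neg_mul_mul_rpow {s z : ℝ} (hs : -1 < s) (hz : 0 < z) :
    ∫ t in Ioi 0, exp (-(z * t)) * t ^ s = Gamma (s + 1) / z ^ (s + 1) := by
  have h := integral_rpow_mul_exp_neg_mul_Ioi (a := s + 1) (by linarith) hz
  rw [add_sub_cancel_right] at h
  simp_rw [mul_comm (exp _), h, one_div, inv_rpow hz.le, inv_mul_eq_div]

lemma integrableOn_exp_neg_mul_mul_rpow {s z : ℝ} (hs : -1 < s) (hz : 0 < z) :
    IntegrableOn (fun t ↦ exp (-(z * t)) * t ^ s) (Ioi 0) := by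
  refine .of_integral_ne_zero ?_
  have := Gamma_pos_of_pos (show 0 < s + 1 by linarith)
  rw [integral_exp_neg_mul_mul_rpow hs hz]
  positivity

section MittagLefflerTerm

variable {α z : ℝ} (c : ℝ) (k : ℕ)

lemma exp_neg_mul_mul_mittagLefflerTerm {t : ℝ} (ht : 0 ≤ t) :
    exp (-(z * t)) * mittagLefflerTerm α 1 (c * t ^ α) k
      = c ^ k / Gamma (α * k + 1) * (exp (-(z * t)) * t ^ (α * k)) := by
  rw [mittagLefflerTerm, mul_pow, ← rpow_natCast (t ^ α), ← rpow_mul ht]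
  ring

lemma norm_exp_neg_mul_mul_mittagLefflerTerm (hα : 0 ≤ α) {t : ℝ} (ht : 0 ≤ t) :
    ‖exp (-(z * t)) * mittagLefflerTerm α 1 (c * t ^ α) k‖
      = exp (-(z * t)) * mittagLefflerTerm α 1 (|c| * t ^ α) k := by
  have hΓ : 0 < Gamma (α * k + 1) := Gamma_pos_of_pos (by positivity)
  rw [mittagLefflerTerm, mittagLefflerTerm, norm_mul, norm_div, norm_pow, norm_mul,
    Real.norm_eq_abs, Real.norm_eq_abs, Real.norm_eq_abs, Real.norm_eq_abs, abs_exp,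
    abs_of_nonneg (rpow_nonneg ht α), abs_of_pos hΓ]

lemma integrableOn_exp_neg_mul_mul_mittagLefflerTerm (hα : 0 ≤ α) (hz : 0 < z) :
    IntegrableOn (fun t ↦ exp (-(z * t)) * mittagLefflerTerm α 1 (c * t ^ α) k) (Ioi 0) := by
  refine IntegrableOn.congr_fun ((integrableOn_exp_neg_mul_mul_rpow (s := α * k)
    (neg_one_lt_zero.trans_le (by positivity)) hz).const_mul (c ^ k / Gamma (α * k + 1)))
    (fun t ht ↦ ?_) measurableSet_Ioi
  exact (exp_neg_mul_mul_mittagLefflerTerm c k (le_of_lt ht)).symm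

lemma integral_exp_neg_mul_mul_mittagLefflerTerm (hα : 0 ≤ α) (hz : 0 < z) :
    ∫ t in Ioi 0, exp (-(z * t)) * mittagLefflerTerm α 1 (c * t ^ α) k
      = z⁻¹ * (c / z ^ α) ^ k := by
  have hΓ : 0 < Gamma (α * k + 1) := Gamma_pos_of_pos (by positivity)
  have hαk : -1 < α * k := neg_one_lt_zero.trans_le (by positivity)
  rw [setIntegral_congr_fun measurableSet_Ioi
      (fun t ht ↦ exp_neg_mul_mul_mittagLefflerTerm c k (le_of_lt ht)),
    integral_const_mul, integral_exp_neg_mul_mul_rpow hαk hz,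
    rpow_add hz, rpow_one, rpow_mul hz.le, rpow_natCast, div_pow, inv_mul_eq_div]
  field_simp

lemma integral_norm_exp_neg_mul_mul_mittagLefflerTerm (hα : 0 ≤ α) (hz : 0 < z) :
    ∫ t in Ioi 0, ‖exp (-(z * t)) * mittagLefflerTerm α 1 (c * t ^ α) k‖
      = z⁻¹ * (|c| / z ^ α) ^ k := by
  rw [setIntegral_congr_fun measurableSet_Ioi
      (fun t ht ↦ norm_exp_neg_mul_mul_mittagLefflerTerm c k hα (le_of_lt ht)),
    integral_exp_neg_mul_mul_mittagLefflerTerm |c| k hα hz]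

end MittagLefflerTerm

theorem integral_exp_neg_mul_mul_mittagLefflerReal {α z c : ℝ} (hα : 0 ≤ α) (hz : 0 < z)
    (hc : |c| < z ^ α) :
    ∫ t in Ioi 0, exp (-(z * t)) * mittagLefflerReal α 1 (c * t ^ α)
      = z⁻¹ * (1 - c / z ^ α)⁻¹ := by
  have hzα : 0 < z ^ α := rpow_pos_of_pos hz α
  have hratio : ‖c / z ^ α‖ < 1 := by
    rwa [norm_div, Real.norm_eq_abs, Real.norm_eq_abs, abs_of_pos hzα, div_lt_one hzα]
  have hsum_norm : Summable fun k : ℕ ↦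
      ∫ t in Ioi 0, ‖exp (-(z * t)) * mittagLefflerTerm α 1 (c * t ^ α) k‖ := by
    simp_rw [integral_norm_exp_neg_mul_mul_mittagLefflerTerm c _ hα hz]
    refine (summable_geometric_of_lt_one (by positivity) ?_).mul_left _
    rwa [← abs_of_pos hzα, ← abs_div, ← Real.norm_eq_abs]
  have htermwise := hasSum_integral_of_summable_integral_norm
    (fun k ↦ integrableOn_exp_neg_mul_mul_mittagLefflerTerm c k hα hz) hsum_norm
  simp_rw [integral_exp_neg_mul_mul_mittagLefflerTerm c _ hα hz, tsum_mul_left] at htermwise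
  exact htermwise.unique ((hasSum_geometric_of_norm_lt_one hratio).mul_left _)

theorem laplace_mittagLeffler_general (α lam : ℝ) (hα : 0 < α)
    (hlam : 0 < lam) (z : ℝ) (hz : lam ^ (1 / α) < z) :
    (∫ t in Set.Ioi (0:ℝ), Real.exp (-(z * t)) * mittagLefflerReal α 1 (-(lam * t ^ α)))
      = z ^ (α - 1) / (z ^ α + lam) := by
  have hz0 : 0 < z := (rpow_pos_of_pos hlam _).trans hz
  have hlam_lt : lam < z ^ α := by
    rwa [one_div, rpow_inv_lt_iff_of_pos hlam.le hz0.le hα] at hz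
  have hzα : 0 < z ^ α := hlam.trans hlam_lt
  simp_rw [← neg_mul lam]
  rw [integral_exp_neg_mul_mul_mittagLefflerReal hα.le hz0 (by rwa [abs_neg, abs_of_pos hlam]),
    rpow_sub_one hz0.ne', neg_div, sub_neg_eq_add, one_add_div hzα.ne', inv_div]
  ring

/-- Laplace transform of the Mittag-Leffler function: for `0 < α < 1`, `λ > 0`
and real `z > λ^{1/α}`,
`∫₀^∞ e^{−zt} E_{α,1}(−λ t^α) dt = z^{α−1}/(z^α + λ)`. -/
theorem laplace_mittagLeffler (α lam : ℝ) (hα : 0 < α) (hα1 : α < 1)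
    (hlam : 0 < lam) (z : ℝ) (hz : lam ^ (1 / α) < z) :
    (∫ t in Set.Ioi (0:ℝ), Real.exp (-(z * t)) * mittagLefflerReal α 1 (-(lam * t ^ α)))
      = z ^ (α - 1) / (z ^ α + lam) :=
  laplace_mittagLeffler_general α lam hα hlam z hz
end
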